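/- For every integer m ≥ 0, ζ(1̄, 1̄, {1}_m) = -Li_{m+2}(1/2), where ζ(1̄, 1̄, {1}_m) = Σ_{k_0 > k_1 > ⋯ > k_{m+1} ≥ 1} (-1)^{k_0 + k_1} / (k_0 k_1 ⋯ k_{m+1}) and Li_p(x) = Σ_{n≥1} x^n/n^p. -/

import Mathlib

/-!
Exchanging the order of summation turns the `N`-th partial sum into
`∑_{j ≤ N} ζ_{j-1}({1}_m)/j · (-1)ʲ ∑_{j<n≤N} (-1)ⁿ/n`, and the inner alternating sum differs
from `-s_j`, where `s_j = ∑_{n>j} (-1)^(n-j-1)/n = ∫₀¹ xʲ/(1+x) dx`, by at most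
`s_N ≤ 1/(N+1)`. The accumulated error is at most `ζ_N({1}_{m+1})/(N+1)`, which tends to `0`
(a Cesàro mean of a null sequence, by induction on `m`). Expanding `1/(1+x) = ∑ᵢ (1-x)ⁱ/2ⁱ⁺¹`
writes `s_j` as `∑ᵢ 2^(-i-1) B(i+1, j+1)`, and Abel summation against
`B(i+1, j) - B(i+1, j+1) = (i+1) B(i+1, j+1)/j` gives
`∑_j ζ_{j-1}({1}_m)/j · B(i+1, j+1) = (i+1)^(-m-2)`; summing over `i` yields `Li_{m+2}(1/2)`.
-/

open Filter

/-- Multiple harmonic number `ζ_n({1}_m)`. -/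
noncomputable def mhn : ℕ → ℕ → ℝ
  | _, 0 => 1
  | n, m + 1 => ∑ j ∈ Finset.Icc 1 n, (1 / (j : ℝ)) * mhn (j - 1) m

open Finset Topology Nat

lemma sum_Icc_sum_Ico_comm {M : Type*} [AddCommMonoid M] (N : ℕ) (f : ℕ → ℕ → M) :
    ∑ n ∈ Icc 1 N, ∑ j ∈ Ico 1 n, f n j = ∑ j ∈ Icc 1 N, ∑ n ∈ Ioc j N, f n j :=
  Finset.sum_comm' fun n j => by simp only [mem_Icc, mem_Ico, mem_Ioc]; omega

lemma sum_Icc_one_eq_sum_range_succ {M : Type*} [AddCommMonoid M] {f : ℕ → M} (h0 : f 0 = 0)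
    (N : ℕ) : ∑ j ∈ Icc 1 N, f j = ∑ j ∈ range (N + 1), f j := by
  rw [range_eq_Ico, sum_eq_sum_Ico_succ_bot N.succ_pos, h0, zero_add, Nat.succ_eq_add_one,
    Ico_add_one_right_eq_Icc]

lemma HasSum.tendsto_sum_Icc {M : Type*} [AddCommMonoid M] [TopologicalSpace M] {f : ℕ → M}
    {a : M} (h : HasSum f a) (h0 : f 0 = 0) :
    Tendsto (fun N ↦ ∑ j ∈ Icc 1 N, f j) atTop (𝓝 a) := by
  simp_rw [sum_Icc_one_eq_sum_range_succ h0]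
  exact (tendsto_add_atTop_iff_nat 1).2 h.tendsto_sum_nat

lemma hasSum_of_tendsto_sum_Icc {f : ℕ → ℝ} {a : ℝ} (hf : ∀ j, 0 ≤ f j) (h0 : f 0 = 0)
    (h : Tendsto (fun N ↦ ∑ j ∈ Icc 1 N, f j) atTop (𝓝 a)) : HasSum f a := by
  simp_rw [sum_Icc_one_eq_sum_range_succ h0] at h
  exact (hasSum_iff_tendsto_nat_of_nonneg hf a).2 ((tendsto_add_atTop_iff_nat 1).1 h)

/-- `B(i + 1, j + 1) = ∫₀¹ xʲ (1 - x)ⁱ dx`. -/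
noncomputable def betaNat (i j : ℕ) : ℝ := (i ! * j ! : ℝ) / (i + j + 1)!

lemma betaNat_pos (i j : ℕ) : 0 < betaNat i j := by
  unfold betaNat; positivity

lemma betaNat_zero_left (j : ℕ) : betaNat 0 j = 1 / (j + 1) := by
  rw [betaNat, zero_add, factorial_succ, factorial_zero]
  push_cast
  field_simp

lemma betaNat_zero_right (i : ℕ) : betaNat i 0 = 1 / (i + 1) := by
  rw [betaNat, add_zero, factorial_succ, factorial_zero]
  push_cast
  field_simp

lemma betaNat_succ_left (i j : ℕ) :
    betaNat (i + 1) j = betaNat i j * ((i + 1) / (i + j + 2)) := by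
  rw [betaNat, betaNat, show i + 1 + j + 1 = i + j + 1 + 1 by ring, factorial_succ (i + j + 1),
    factorial_succ i]
  push_cast
  field_simp
  ring

lemma betaNat_succ_right (i j : ℕ) :
    betaNat i (j + 1) = betaNat i j * ((j + 1) / (i + j + 2)) := by
  rw [betaNat, betaNat, ← add_assoc, factorial_succ (i + j + 1), factorial_succ j]
  push_cast
  field_simp
  ring

lemma betaNat_succ_right_add_succ_left (i j : ℕ) :
    betaNat i (j + 1) + betaNat (i + 1) j = betaNat i j := by
  rw [betaNat_succ_right, betaNat_succ_left]
  field_simp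
  ring

lemma betaNat_sub_betaNat_succ_right (i j : ℕ) :
    betaNat i j - betaNat i (j + 1) = (i + 1) * betaNat i (j + 1) / (j + 1) := by
  rw [betaNat_succ_right]
  field_simp
  ring

lemma betaNat_le (i j : ℕ) : betaNat i j ≤ 1 / (j + 1) := by
  induction i with
  | zero => rw [betaNat_zero_left]
  | succ i ih =>
    rw [betaNat_succ_left]
    refine (mul_le_of_le_one_right (betaNat_pos i j).le ?_).trans ih
    rw [div_le_one (by positivity)]
    linarith [(j.cast_nonneg : (0 : ℝ) ≤ j)]

lemma betaNat_le_one (i j : ℕ) : betaNat i j ≤ 1 :=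
  (betaNat_le i j).trans (div_le_one_of_le₀ (by simp) (by positivity))

lemma sum_Ioc_betaNat_div (i : ℕ) {u N : ℕ} (h : u ≤ N) :
    ∑ j ∈ Ioc u N, betaNat i j / j = (betaNat i u - betaNat i N) / (i + 1) := by
  induction N, h using Nat.le_induction with
  | base => simp
  | succ N _ ih =>
    have step :
        betaNat i (N + 1) / (N + 1 : ℕ) = (betaNat i N - betaNat i (N + 1)) / (i + 1) := by
      rw [betaNat_sub_betaNat_succ_right]
      push_cast
      field_simp
    rw [sum_Ioc_succ_top (by omega), ih, step]
    ring

/-- `∫₀¹ xʲ / (1 + x) dx = ∑_{n > j} (-1)^(n-j-1) / n`, expanded through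
`1 / (1 + x) = ∑ᵢ (1 - x)ⁱ / 2ⁱ⁺¹`. -/
noncomputable def altTail (j : ℕ) : ℝ := ∑' i, (1 / 2 : ℝ) ^ (i + 1) * betaNat i j

lemma hasSum_half_pow_succ : HasSum (fun i : ℕ ↦ (1 / 2 : ℝ) ^ (i + 1)) 1 := by
  convert hasSum_geometric_two' 1 using 2 with i
  rw [pow_succ, div_div, one_div_pow, one_div_mul_one_div, mul_comm]

lemma summable_altTail (j : ℕ) : Summable fun i ↦ (1 / 2 : ℝ) ^ (i + 1) * betaNat i j :=
  hasSum_half_pow_succ.summable.of_nonneg_of_le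
    (fun i ↦ mul_nonneg (by positivity) (betaNat_pos i j).le)
    (fun i ↦ mul_le_of_le_one_right (by positivity) (betaNat_le_one i j))

lemma altTail_nonneg (j : ℕ) : 0 ≤ altTail j :=
  tsum_nonneg fun i ↦ mul_nonneg (by positivity) (betaNat_pos i j).le

lemma altTail_le (j : ℕ) : altTail j ≤ 1 / (j + 1) := by
  have h := hasSum_half_pow_succ.mul_right (1 / ((j : ℝ) + 1))
  rw [one_mul] at h
  exact hasSum_le (fun i ↦ mul_le_mul_of_nonneg_left (betaNat_le i j) (by positivity))
    (summable_altTail j).hasSum h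

lemma altTail_add_altTail_succ (j : ℕ) : altTail j + altTail (j + 1) = 1 / (j + 1) := by
  set R := ∑' i, (1 / 2 : ℝ) ^ (i + 1 + 1) * betaNat (i + 1) j
  have hR : Summable fun i ↦ (1 / 2 : ℝ) ^ (i + 1 + 1) * betaNat (i + 1) j :=
    (summable_nat_add_iff 1).2 (summable_altTail j)
  have hpeel : altTail j = 1 / 2 * betaNat 0 j + R := by
    rw [altTail, (summable_altTail j).tsum_eq_zero_add, zero_add, pow_one]
  have hshift : altTail (j + 1) = altTail j - 2 * R := by
    have hterm : ∀ i, (1 / 2 : ℝ) ^ (i + 1) * betaNat i (j + 1) = (1 / 2 : ℝ) ^ (i + 1) * betaNat i j -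
        2 * ((1 / 2 : ℝ) ^ (i + 1 + 1) * betaNat (i + 1) j) :=
      fun i ↦ by rw [← betaNat_succ_right_add_succ_left i j, pow_succ]; ring
    rw [altTail, tsum_congr hterm, (summable_altTail j).tsum_sub (hR.mul_left 2), tsum_mul_left,
      altTail]
  rw [hshift, hpeel, betaNat_zero_left]
  ring

lemma alternating_sum_add_altTail (j k : ℕ) :
    (-1 : ℝ) ^ j * ∑ n ∈ Ioc j (j + k), (-1 : ℝ) ^ n / n + altTail j =
      (-1) ^ k * altTail (j + k) := by
  induction k generalizing j with
  | zero => simp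
  | succ k ih =>
    have hsplit : ∑ n ∈ Ioc j (j + (k + 1)), (-1 : ℝ) ^ n / n =
        (-1) ^ (j + 1) / (j + 1 : ℕ) +
          ∑ n ∈ Ioc (j + 1) (j + (k + 1)), (-1 : ℝ) ^ n / n := by
      rw [← Icc_add_one_left_eq_Ioc, Icc_eq_cons_Ioc (by omega), sum_cons]
    have hnext := ih (j + 1)
    rw [add_right_comm j 1 k, add_assoc] at hnext
    have hsq : (-1 : ℝ) ^ j * (-1) ^ j = 1 := by rw [← mul_pow]; norm_num
    rw [pow_succ] at hnext
    rw [hsplit, pow_succ, pow_succ]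
    push_cast
    linear_combination -hnext + altTail_add_altTail_succ j - hsq / ((j : ℝ) + 1)

lemma abs_alternating_sum_add_altTail_le {j N : ℕ} (h : j ≤ N) :
    |(-1 : ℝ) ^ j * ∑ n ∈ Ioc j N, (-1 : ℝ) ^ n / n + altTail j| ≤ 1 / (N + 1) := by
  obtain ⟨k, rfl⟩ := exists_add_of_le h
  rw [alternating_sum_add_altTail, abs_mul, abs_pow, abs_neg, abs_one, one_pow, one_mul,
    abs_of_nonneg (altTail_nonneg _)]
  exact altTail_le _

lemma mhn_nonneg (n m : ℕ) : 0 ≤ mhn n m := by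
  induction m generalizing n with
  | zero => rw [mhn]; exact zero_le_one
  | succ m ih => rw [mhn]; exact sum_nonneg fun j _ ↦ mul_nonneg (by positivity) (ih _)

lemma mhn_succ (n m : ℕ) : mhn n (m + 1) = ∑ j ∈ Icc 1 n, mhn (j - 1) m / j := by
  simp only [mhn, one_div_mul_eq_div]

lemma mhn_pred_succ (j m : ℕ) : mhn (j - 1) (m + 1) = ∑ u ∈ Ico 1 j, mhn (u - 1) m / u := by
  rw [mhn_succ]
  exact sum_congr (ext fun u ↦ by simp only [mem_Icc, mem_Ico]; omega) fun _ _ ↦ rfl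

lemma tendsto_mhn_div_atTop (m : ℕ) :
    Tendsto (fun N : ℕ ↦ mhn N m / (N + 1)) atTop (𝓝 0) := by
  induction m with
  | zero => simpa [mhn] using tendsto_one_div_add_atTop_nhds_zero_nat (𝕜 := ℝ)
  | succ m ih =>
    have hnull : Tendsto (fun j : ℕ ↦ mhn (j - 1) m / j) atTop (𝓝 0) := by
      rw [← tendsto_add_atTop_iff_nat 1]
      simpa only [Nat.add_sub_cancel, cast_succ] using ih
    refine ((tendsto_add_atTop_iff_nat 1).2 hnull.cesaro).congr fun N ↦ ?_
    rw [mhn_succ, sum_Icc_one_eq_sum_range_succ (by simp)]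
    push_cast
    ring

lemma tendsto_betaNat_mul_mhn (i m : ℕ) :
    Tendsto (fun N : ℕ ↦ betaNat i N * mhn N m) atTop (𝓝 0) :=
  squeeze_zero (fun N ↦ mul_nonneg (betaNat_pos i N).le (mhn_nonneg N m))
    (fun N ↦ (mul_le_mul_of_nonneg_right (betaNat_le i N) (mhn_nonneg N m)).trans_eq
      (one_div_mul_eq_div _ _))
    (tendsto_mhn_div_atTop m)

lemma sum_mhn_succ_mul_betaNat (m i N : ℕ) :
    ∑ j ∈ Icc 1 N, mhn (j - 1) (m + 1) / j * betaNat i j =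
      (∑ j ∈ Icc 1 N, mhn (j - 1) m / j * betaNat i j - betaNat i N * mhn N (m + 1)) /
        (i + 1) := by
  have inner : ∀ u ∈ Icc 1 N, ∑ j ∈ Ioc u N, mhn (u - 1) m / u * (betaNat i j / j) =
      (mhn (u - 1) m / u * betaNat i u - betaNat i N * (mhn (u - 1) m / u)) / (i + 1) := by
    intro u hu
    rw [← mul_sum, sum_Ioc_betaNat_div i (mem_Icc.1 hu).2]
    ring
  calc ∑ j ∈ Icc 1 N, mhn (j - 1) (m + 1) / j * betaNat i j
      = ∑ j ∈ Icc 1 N, ∑ u ∈ Ico 1 j, mhn (u - 1) m / u * (betaNat i j / j) := by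
        refine sum_congr rfl fun j _ ↦ ?_
        rw [mhn_pred_succ, sum_div, sum_mul]
        exact sum_congr rfl fun u _ ↦ by ring
    _ = ∑ u ∈ Icc 1 N, ∑ j ∈ Ioc u N, mhn (u - 1) m / u * (betaNat i j / j) :=
        sum_Icc_sum_Ico_comm N _
    _ = _ := by
        rw [sum_congr rfl inner, ← sum_div, sum_sub_distrib, ← mul_sum, mhn_succ]

lemma tendsto_sum_mhn_mul_betaNat (m i : ℕ) :
    Tendsto (fun N ↦ ∑ j ∈ Icc 1 N, mhn (j - 1) m / j * betaNat i j) atTop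
      (𝓝 (1 / ((i : ℝ) + 1) ^ (m + 2))) := by
  induction m with
  | zero =>
    have hsum : ∀ N, ∑ j ∈ Icc 1 N, mhn (j - 1) 0 / j * betaNat i j =
        (1 / (i + 1) - betaNat i N * mhn N 0) / (i + 1) := fun N ↦ by
      rw [mhn, mul_one, ← betaNat_zero_right, ← sum_Ioc_betaNat_div i N.zero_le,
        ← Icc_add_one_left_eq_Ioc]
      exact sum_congr rfl fun j _ ↦ by rw [mhn]; ring
    have h := ((tendsto_const_nhds (x := 1 / ((i : ℝ) + 1))).sub
      (tendsto_betaNat_mul_mhn i 0)).div_const ((i : ℝ) + 1)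
    rw [sub_zero, div_div, ← sq] at h
    exact h.congr fun N ↦ (hsum N).symm
  | succ m ih =>
    have h := (ih.sub (tendsto_betaNat_mul_mhn i (m + 1))).div_const ((i : ℝ) + 1)
    rw [sub_zero, div_div, ← pow_succ] at h
    exact h.congr fun N ↦ (sum_mhn_succ_mul_betaNat m i N).symm

lemma hasSum_mhn_mul_betaNat (m i : ℕ) :
    HasSum (fun j : ℕ ↦ mhn (j - 1) m / j * betaNat i j) (1 / ((i : ℝ) + 1) ^ (m + 2)) :=
  hasSum_of_tendsto_sum_Icc
    (fun j ↦ mul_nonneg (div_nonneg (mhn_nonneg _ _) j.cast_nonneg) (betaNat_pos i j).le)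
    (by simp) (tendsto_sum_mhn_mul_betaNat m i)

lemma hasSum_mhn_mul_altTail (m : ℕ) :
    HasSum (fun j : ℕ ↦ mhn (j - 1) m / j * altTail j)
      (∑' i : ℕ, (1 / 2 : ℝ) ^ (i + 1) / ((i : ℝ) + 1) ^ (m + 2)) := by
  set F : ℕ → ℕ → ℝ :=
    fun i j ↦ mhn (j - 1) m / j * ((1 / 2 : ℝ) ^ (i + 1) * betaNat i j)
  have hrow (i : ℕ) : HasSum (F i) ((1 / 2 : ℝ) ^ (i + 1) / ((i : ℝ) + 1) ^ (m + 2)) := by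
    have hFi : F i = fun j ↦ (1 / 2 : ℝ) ^ (i + 1) * (mhn (j - 1) m / j * betaNat i j) :=
      funext fun j ↦ by ring
    rw [hFi, div_eq_mul_one_div ((1 / 2 : ℝ) ^ (i + 1))]
    exact (hasSum_mhn_mul_betaNat m i).mul_left _
  have hF : Summable (Function.uncurry F) := by
    refine (summable_prod_of_nonneg fun p ↦ ?_).2 ⟨fun i ↦ (hrow i).summable, ?_⟩
    · exact mul_nonneg (div_nonneg (mhn_nonneg _ _) (cast_nonneg _))
        (mul_nonneg (by positivity) (betaNat_pos _ _).le)
    · refine (hasSum_half_pow_succ.summable.of_nonneg_of_le (fun i ↦ by positivity) fun i ↦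
        div_le_self (by positivity) (one_le_pow₀ ?_)).congr fun i ↦ (hrow i).tsum_eq.symm
      linarith [(i.cast_nonneg : (0 : ℝ) ≤ i)]
  have hcol : ∀ j, ∑' i, F i j = mhn (j - 1) m / j * altTail j := fun j ↦ tsum_mul_left
  rw [← funext hcol, ← tsum_congr fun i ↦ (hrow i).tsum_eq, ← hF.tsum_comm]
  exact hF.prod_symm.prod.hasSum

lemma alternating_double_sum_eq (m N : ℕ) :
    ∑ n ∈ Icc 1 N, (-1 : ℝ) ^ n / n * ∑ j ∈ Ico 1 n, (-1 : ℝ) ^ j / j * mhn (j - 1) m =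
      ∑ j ∈ Icc 1 N,
        mhn (j - 1) m / j * ((-1 : ℝ) ^ j * ∑ n ∈ Ioc j N, (-1 : ℝ) ^ n / n) := by
  simp_rw [mul_sum]
  rw [sum_Icc_sum_Ico_comm]
  exact sum_congr rfl fun j _ ↦ sum_congr rfl fun n _ ↦ by ring

lemma abs_alternating_double_sum_add_le (m N : ℕ) :
    |∑ n ∈ Icc 1 N, (-1 : ℝ) ^ n / n * ∑ j ∈ Ico 1 n, (-1 : ℝ) ^ j / j * mhn (j - 1) m +
        ∑ j ∈ Icc 1 N, mhn (j - 1) m / j * altTail j| ≤ mhn N (m + 1) / (N + 1) := by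
  rw [alternating_double_sum_eq, ← sum_add_distrib, mhn_succ, sum_div]
  refine (abs_sum_le_sum_abs _ _).trans (sum_le_sum fun j hj ↦ ?_)
  have ha : 0 ≤ mhn (j - 1) m / j := div_nonneg (mhn_nonneg _ _) (cast_nonneg _)
  rw [← mul_add, abs_mul, abs_of_nonneg ha, div_eq_mul_one_div (_ / _)]
  exact mul_le_mul_of_nonneg_left (abs_alternating_sum_add_altTail_le (mem_Icc.1 hj).2) ha

theorem stmt_6 (m : ℕ) :
    Tendsto (fun N : ℕ =>
        ∑ n ∈ Finset.Icc 1 N, (-1 : ℝ) ^ n / (n : ℝ) *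
          ∑ j ∈ Finset.Ico 1 n, (-1 : ℝ) ^ j / (j : ℝ) * mhn (j - 1) m)
      atTop
      (nhds (-(∑' i : ℕ, (1 / 2 : ℝ) ^ (i + 1) / ((i : ℝ) + 1) ^ (m + 2)))) := by
  have hmain := (hasSum_mhn_mul_altTail m).tendsto_sum_Icc (by simp)
  have herr := squeeze_zero_norm
    (fun N ↦ (Real.norm_eq_abs _).trans_le (abs_alternating_double_sum_add_le m N))
    (tendsto_mhn_div_atTop (m + 1))
  simpa using herr.sub hmain
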